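/- For every n ≥ 2, the number of maximal transitive partitions of the transitive tournament on n vertices, i.e., partitions of the edge set {(i,j) : 1 ≤ i < j ≤ n} into exactly n − 1 nonempty blocks such that for all 1 ≤ i < j < k ≤ n the edge (i,k) lies in the same block as (i,j) or in the same block as (j,k), equals the Catalan number C_{n−1} = (1/n)·binomial(2n−2, n−1). -/

import Mathlib

/-!
In a transitive partition of the tournament on `0, …, N`, every edge `(i, k)` lies in the block of
some edge `(m, m + 1)` with `i ≤ m < k` (split `(i, k)` at `k - 1` and induct), so there are at
most `N` blocks, and exactly `N` precisely when the edges `(m, m + 1)` lie in distinct blocks.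
A maximal transitive partition is therefore the same as a labelling `f i k ∈ [i, k)` of the
edges with `f i k ∈ {f i j, f j k}` for `i < j < k`, the label being the block's adjacent edge.
Such labellings correspond to binary trees with `N` nodes: `m = f 0 N` is the root, every edge
crossing `m` carries the label `m`, and the labellings of `[0, m]` and `[m + 1, N]` give the two
subtrees. Binary trees with `N` nodes are counted by `catalan N`.
-/

/-- The edge set of the transitive tournament on `n` vertices:
ordered pairs `(i, j)` with `i < j`. -/
abbrev TournEdge (n : ℕ) := {p : Fin n × Fin n // p.1 < p.2}

/-- The edge `(a, b)` of the transitive tournament, for `a < b`. -/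
def te {n : ℕ} (a b : Fin n) (h : a < b) : TournEdge n := ⟨(a, b), h⟩

/-- A partition of the edge set of the transitive tournament (encoded as a setoid,
whose classes are the nonempty blocks) is transitive if for all `i < j < k` the
edge `(i,k)` lies in the same block as `(i,j)` or in the same block as `(j,k)`. -/
def IsTransitivePartition {n : ℕ} (S : Setoid (TournEdge n)) : Prop :=
  ∀ (i j k : Fin n) (hij : i < j) (hjk : j < k),
    S.r (te i k (hij.trans hjk)) (te i j hij) ∨
      S.r (te i k (hij.trans hjk)) (te j k hjk)

structure IsSplitLabeling (N : ℕ) (f : ℕ → ℕ → ℕ) : Prop where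
  mem : ∀ ⦃i k⦄, i < k → k ≤ N → i ≤ f i k ∧ f i k < k
  split : ∀ ⦃i j k⦄, i < j → j < k → k ≤ N → f i k = f i j ∨ f i k = f j k

namespace IsSplitLabeling

variable {N : ℕ} {f : ℕ → ℕ → ℕ}

theorem mono (hf : IsSplitLabeling N f) {M : ℕ} (hMN : M ≤ N) : IsSplitLabeling M f where
  mem _ _ hik hk := hf.mem hik (hk.trans hMN)
  split _ _ _ hij hjk hk := hf.split hij hjk (hk.trans hMN)

theorem shift (hf : IsSplitLabeling N f) (c : ℕ) :
    IsSplitLabeling (N - c) (fun i k => f (c + i) (c + k) - c) where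
  mem i k hik hk := by
    have := hf.mem (i := c + i) (k := c + k) (by omega) (by omega)
    omega
  split i j k hij hjk hk := by
    have := hf.mem (i := c + i) (k := c + k) (by omega) (by omega)
    have := hf.mem (i := c + i) (k := c + j) (by omega) (by omega)
    have := hf.mem (i := c + j) (k := c + k) (by omega) (by omega)
    have := hf.split (i := c + i) (j := c + j) (k := c + k) (by omega) (by omega) (by omega)
    omega

theorem eq_root (hf : IsSplitLabeling N f) {i j : ℕ} (hi : i ≤ f 0 N) (hj : f 0 N < j)
    (hjN : j ≤ N) : f i j = f 0 N := by
  have hiN : f i N = f 0 N := by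
    rcases i.eq_zero_or_pos with rfl | hi0
    · rfl
    have := hf.mem hi0 (by omega)
    have := hf.split hi0 (by omega : i < N) le_rfl
    omega
  rcases hjN.lt_or_eq with hjN | rfl
  · have := hf.mem (by omega : j < N) le_rfl
    have := hf.split (by omega : i < j) hjN le_rfl
    omega
  · exact hiN

end IsSplitLabeling

namespace BinaryTree

variable {α : Type*}

/-- With the nodes of `t` numbered `0, …, t.numNodes - 1` in order, `t.splitLabel i k` is the
highest node among the nodes `i, …, k - 1`. -/
def splitLabel : BinaryTree α → ℕ → ℕ → ℕ
  | nil, _, _ => 0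
  | node _ l r, i, k =>
    if k ≤ l.numNodes then splitLabel l i k
    else if l.numNodes < i then
      l.numNodes + 1 + splitLabel r (i - (l.numNodes + 1)) (k - (l.numNodes + 1))
    else l.numNodes

theorem splitLabel_mem (t : BinaryTree α) {i k : ℕ} (hik : i < k) (hk : k ≤ t.numNodes) :
    i ≤ t.splitLabel i k ∧ t.splitLabel i k < k := by
  induction t generalizing i k with
  | nil => simp [numNodes] at hk; omega
  | node _ l r ihl ihr =>
    simp only [numNodes] at hk
    rw [splitLabel]
    split_ifs with hkl hil
    · exact ihl hik hkl
    · have := ihr (i := i - (l.numNodes + 1)) (k := k - (l.numNodes + 1)) (by omega) (by omega)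
      omega
    · omega

theorem splitLabel_split (t : BinaryTree α) {i j k : ℕ} (hij : i < j) (hjk : j < k)
    (hk : k ≤ t.numNodes) :
    t.splitLabel i k = t.splitLabel i j ∨ t.splitLabel i k = t.splitLabel j k := by
  induction t generalizing i j k with
  | nil => simp [numNodes] at hk; omega
  | node _ l r ihl ihr =>
    simp only [numNodes] at hk
    simp only [splitLabel]
    by_cases hkl : k ≤ l.numNodes
    · simp only [hkl, (by omega : j ≤ l.numNodes), if_true]
      exact ihl hij hjk hkl
    by_cases hil : l.numNodes < i
    · have hjl : ¬ j ≤ l.numNodes := by omega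
      simp only [hkl, hil, hjl, (by omega : l.numNodes < j), if_true, if_false,
        Nat.add_left_cancel_iff]
      exact ihr (i := i - (l.numNodes + 1)) (j := j - (l.numNodes + 1))
        (k := k - (l.numNodes + 1)) (by omega) (by omega) (by omega)
    by_cases hjl : j ≤ l.numNodes
    · simp [hkl, hil, hjl]
    · simp [hkl, hil, hjl]

theorem splitLabel_node_zero (a : α) (l r : BinaryTree α) {k : ℕ} (hk : l.numNodes < k) :
    (node a l r).splitLabel 0 k = l.numNodes := by
  rw [splitLabel, if_neg (by omega), if_neg (by omega)]

theorem isSplitLabeling_splitLabel {t : BinaryTree α} {N : ℕ} (ht : t.numNodes = N) :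
    IsSplitLabeling N t.splitLabel :=
  ht ▸ ⟨fun _ _ => t.splitLabel_mem, fun _ _ _ => t.splitLabel_split⟩

theorem eq_of_splitLabel_eq {t s : BinaryTree Unit} (hts : t.numNodes = s.numNodes)
    (h : ∀ i k, i < k → k ≤ t.numNodes → t.splitLabel i k = s.splitLabel i k) : t = s := by
  induction t generalizing s with
  | nil => cases s <;> simp_all [numNodes]
  | node _ l r ihl ihr =>
    cases s with
    | nil => simp [numNodes] at hts
    | node _ l' r' =>
      simp only [numNodes] at hts h
      have hl : l.numNodes = l'.numNodes := by
        have := h 0 _ (by omega) le_rfl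
        rwa [splitLabel_node_zero _ l r (by omega), splitLabel_node_zero _ l' r' (by omega)] at this
      have hlr : l = l' := ihl hl fun i k hik hk => by
        simpa only [splitLabel, hk, hl ▸ hk, if_true] using h i k hik (by omega)
      have hrr : r = r' := ihr (by omega) fun i k hik hk => by
        have := h (l.numNodes + 1 + i) (l.numNodes + 1 + k) (by omega) (by omega)
        simp only [splitLabel, ← hl] at this
        rw [if_neg (by omega), if_pos (by omega), if_neg (by omega), if_pos (by omega)] at this
        simpa using this
      rw [hlr, hrr]

theorem _root_.IsSplitLabeling.exists_splitLabel_eq {N : ℕ} {f : ℕ → ℕ → ℕ}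
    (hf : IsSplitLabeling N f) :
    ∃ t : BinaryTree Unit, t.numNodes = N ∧ ∀ i k, i < k → k ≤ N → t.splitLabel i k = f i k := by
  induction N using Nat.strong_induction_on generalizing f with
  | _ N ih =>
  rcases N.eq_zero_or_pos with rfl | hN
  · exact ⟨nil, rfl, fun i k hik hk => by omega⟩
  have hm := hf.mem hN le_rfl
  obtain ⟨l, hl, hlf⟩ := ih (f 0 N) (by omega) (hf.mono hm.2.le)
  obtain ⟨r, hr, hrf⟩ := ih (N - (f 0 N + 1)) (by omega) (hf.shift (f 0 N + 1))
  refine ⟨node () l r, by simp only [numNodes]; omega, fun i k hik hk => ?_⟩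
  rw [splitLabel, hl]
  split_ifs with hkm him
  · exact hlf i k hik (hl ▸ hkm)
  · have := hf.mem hik hk
    rw [hrf _ _ (by omega) (by omega), Nat.add_sub_cancel' (by omega : f 0 N + 1 ≤ i),
      Nat.add_sub_cancel' (by omega : f 0 N + 1 ≤ k)]
    omega
  · exact (hf.eq_root (by omega) (by omega) hk).symm

end BinaryTree

def adjEdge {N : ℕ} (m : Fin N) : TournEdge (N + 1) :=
  te m.castSucc m.succ m.castSucc_lt_succ

namespace IsTransitivePartition

variable {N : ℕ} {S : Setoid (TournEdge (N + 1))}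

theorem exists_rel_adjEdge (hS : IsTransitivePartition S) (e : TournEdge (N + 1)) :
    ∃ m : Fin N, e.1.1 ≤ m.castSucc ∧ m.succ ≤ e.1.2 ∧ S.r e (adjEdge m) := by
  obtain ⟨⟨i, k⟩, hik⟩ := e
  induction k using Fin.induction with
  | zero => exact absurd hik (Fin.not_lt_zero i)
  | succ j ih =>
    rcases (Fin.le_castSucc_iff.2 hik).lt_or_eq with hij | rfl
    · rcases hS i j.castSucc j.succ hij j.castSucc_lt_succ with h | h
      · obtain ⟨m, him, hmj, hm⟩ := ih hij
        exact ⟨m, him, hmj.trans j.castSucc_lt_succ.le, S.trans' h hm⟩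
      · exact ⟨j, hij.le, le_rfl, h⟩
    · exact ⟨j, le_rfl, le_rfl, S.refl' _⟩

theorem surjective_mk_adjEdge (hS : IsTransitivePartition S) :
    Function.Surjective fun m : Fin N => (⟦adjEdge m⟧ : Quotient S) := by
  rintro ⟨e⟩
  obtain ⟨m, -, -, hm⟩ := hS.exists_rel_adjEdge e
  exact ⟨m, Quotient.sound (S.symm' hm)⟩

theorem bijective_mk_adjEdge (hS : IsTransitivePartition S) (hcard : Nat.card (Quotient S) = N) :
    Function.Bijective fun m : Fin N => (⟦adjEdge m⟧ : Quotient S) :=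
  (Nat.bijective_iff_surjective_and_card _).2
    ⟨hS.surjective_mk_adjEdge, by rw [Nat.card_fin, hcard]⟩

theorem exists_ker_eq (hS : IsTransitivePartition S) (hcard : Nat.card (Quotient S) = N) :
    ∃ ℓ : TournEdge (N + 1) → ℕ, (∀ e, e.1.1 ≤ ℓ e ∧ ℓ e < e.1.2) ∧ Setoid.ker ℓ = S := by
  set b := Equiv.ofBijective _ (hS.bijective_mk_adjEdge hcard)
  refine ⟨fun e => b.symm ⟦e⟧, fun e => ?_, ?_⟩
  · obtain ⟨m, him, hmk, hm⟩ := hS.exists_rel_adjEdge e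
    have hbm : b.symm ⟦e⟧ = m := b.symm_apply_eq.2 (Quotient.sound hm)
    simp only [hbm]
    exact ⟨him, hmk⟩
  · ext e e'
    simp only [Setoid.ker_def, Fin.val_inj, EmbeddingLike.apply_eq_iff_eq, Quotient.eq]

end IsTransitivePartition

def labelSetoid (n : ℕ) (f : ℕ → ℕ → ℕ) : Setoid (TournEdge n) :=
  Setoid.ker fun e => f e.1.1 e.1.2

namespace IsSplitLabeling

variable {N : ℕ} {f g : ℕ → ℕ → ℕ}

theorem apply_succ (hf : IsSplitLabeling N f) {m : ℕ} (hm : m < N) : f m (m + 1) = m := by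
  have := hf.mem m.lt_add_one hm
  omega

theorem isTransitivePartition (hf : IsSplitLabeling N f) :
    IsTransitivePartition (labelSetoid (N + 1) f) :=
  fun _ _ k hij hjk => hf.split hij hjk k.is_le

theorem card_quotient_labelSetoid (hf : IsSplitLabeling N f) :
    Nat.card (Quotient (labelSetoid (N + 1) f)) = N := by
  have hinj : Function.Injective
      fun m : Fin N => (⟦adjEdge m⟧ : Quotient (labelSetoid (N + 1) f)) := by
    intro m m' h
    have : f m (m + 1) = f m' (m' + 1) := Quotient.exact h
    rwa [hf.apply_succ m.2, hf.apply_succ m'.2, Fin.val_inj] at this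
  rw [← Nat.card_eq_of_bijective _ ⟨hinj, hf.isTransitivePartition.surjective_mk_adjEdge⟩,
    Nat.card_fin]

theorem labelSetoid_eq_iff (hf : IsSplitLabeling N f) (hg : IsSplitLabeling N g) :
    labelSetoid (N + 1) f = labelSetoid (N + 1) g ↔
      ∀ i k, i < k → k ≤ N → f i k = g i k := by
  refine ⟨fun h i k hik hk => ?_, fun h => ?_⟩
  · have hm := hf.mem hik hk
    have hrel : (labelSetoid (N + 1) f).r (te ⟨i, by omega⟩ ⟨k, by omega⟩ (Fin.mk_lt_mk.2 hik))
        (adjEdge ⟨f i k, by omega⟩) := (hf.apply_succ (m := f i k) (by omega)).symm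
    rw [h] at hrel
    have : g i k = g (f i k) (f i k + 1) := hrel
    rw [this, hg.apply_succ (by omega)]
  · ext e e'
    show f _ _ = f _ _ ↔ g _ _ = g _ _
    rw [h _ _ e.2 e.1.2.is_le, h _ _ e'.2 e'.1.2.is_le]

end IsSplitLabeling

def natLabel {N : ℕ} (ℓ : TournEdge (N + 1) → ℕ) (i k : ℕ) : ℕ :=
  if h : i < k ∧ k ≤ N then ℓ (te ⟨i, by omega⟩ ⟨k, by omega⟩ (Fin.mk_lt_mk.2 h.1)) else 0

section natLabel

variable {N : ℕ} (ℓ : TournEdge (N + 1) → ℕ)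

theorem natLabel_of_lt {i k : ℕ} (hik : i < k) (hk : k ≤ N) :
    natLabel ℓ i k = ℓ (te ⟨i, by omega⟩ ⟨k, by omega⟩ (Fin.mk_lt_mk.2 hik)) :=
  dif_pos ⟨hik, hk⟩

theorem labelSetoid_natLabel : labelSetoid (N + 1) (natLabel ℓ) = Setoid.ker ℓ := by
  ext e e'
  show natLabel ℓ _ _ = natLabel ℓ _ _ ↔ ℓ e = ℓ e'
  rw [natLabel_of_lt ℓ e.2 e.1.2.is_le, natLabel_of_lt ℓ e'.2 e'.1.2.is_le]
  rfl

theorem isSplitLabeling_natLabel (hmem : ∀ e, e.1.1 ≤ ℓ e ∧ ℓ e < e.1.2)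
    (hℓ : IsTransitivePartition (Setoid.ker ℓ)) : IsSplitLabeling N (natLabel ℓ) where
  mem i k hik hk := by
    rw [natLabel_of_lt ℓ hik hk]
    exact hmem (te ⟨i, by omega⟩ ⟨k, by omega⟩ (Fin.mk_lt_mk.2 hik))
  split i j k hij hjk hk := by
    rw [natLabel_of_lt ℓ (hij.trans hjk) hk, natLabel_of_lt ℓ hij (by omega),
      natLabel_of_lt ℓ hjk hk]
    exact hℓ ⟨i, by omega⟩ ⟨j, by omega⟩ ⟨k, by omega⟩ (Fin.mk_lt_mk.2 hij) (Fin.mk_lt_mk.2 hjk)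

end natLabel

theorem IsTransitivePartition.exists_labelSetoid_eq {N : ℕ} {S : Setoid (TournEdge (N + 1))}
    (hS : IsTransitivePartition S) (hcard : Nat.card (Quotient S) = N) :
    ∃ f, IsSplitLabeling N f ∧ labelSetoid (N + 1) f = S := by
  obtain ⟨ℓ, hmem, rfl⟩ := hS.exists_ker_eq hcard
  exact ⟨natLabel ℓ, isSplitLabeling_natLabel ℓ hmem hS, labelSetoid_natLabel ℓ⟩

def partitionOfTree (N : ℕ) (t : {t : BinaryTree Unit // t.numNodes = N}) :
    {S : Setoid (TournEdge (N + 1)) // IsTransitivePartition S ∧ Nat.card (Quotient S) = N} :=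
  ⟨labelSetoid (N + 1) t.1.splitLabel,
    (BinaryTree.isSplitLabeling_splitLabel t.2).isTransitivePartition,
    (BinaryTree.isSplitLabeling_splitLabel t.2).card_quotient_labelSetoid⟩

theorem partitionOfTree_bijective (N : ℕ) : Function.Bijective (partitionOfTree N) := by
  refine ⟨fun t s h => Subtype.ext ?_, fun S => ?_⟩
  · refine BinaryTree.eq_of_splitLabel_eq (t.2.trans s.2.symm) fun i k hik hk => ?_
    exact ((BinaryTree.isSplitLabeling_splitLabel t.2).labelSetoid_eq_iff
      (BinaryTree.isSplitLabeling_splitLabel s.2)).1 (congrArg Subtype.val h) i k hik (t.2 ▸ hk)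
  · obtain ⟨f, hf, hfS⟩ := S.2.1.exists_labelSetoid_eq S.2.2
    obtain ⟨t, ht, htf⟩ := hf.exists_splitLabel_eq
    refine ⟨⟨t, ht⟩, Subtype.ext ?_⟩
    exact hfS ▸ ((BinaryTree.isSplitLabeling_splitLabel ht).labelSetoid_eq_iff hf).2 htf

/-- The number of maximal transitive partitions (those with exactly `n - 1` blocks)
of the transitive tournament on `n ≥ 2` vertices is the Catalan number `C_{n-1}`. -/
theorem card_maximal_transitive_partitions (n : ℕ) (hn : 2 ≤ n) :
    Nat.card {S : Setoid (TournEdge n) //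
        IsTransitivePartition S ∧ Nat.card (Quotient S) = n - 1} =
      catalan (n - 1) := by
  obtain ⟨N, rfl⟩ : ∃ N, n = N + 1 := ⟨n - 1, by omega⟩
  rw [Nat.add_sub_cancel, ← Nat.card_eq_of_bijective _ (partitionOfTree_bijective N),
    ← BinaryTree.treesOfNumNodesEq_card_eq_catalan, ← Nat.card_eq_finsetCard]
  exact Nat.card_congr (Equiv.subtypeEquivRight fun _ => BinaryTree.mem_treesOfNumNodesEq.symm)
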